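/- arXiv:2307.13183 — 5 statements merged into one kernel-verified Lean document; each statement's English description precedes it below -/
import Mathlib

section
/- The norm-trace curve X_{q,r}: Tr(y) = Norm(x) has exactly q^{2r−1} affine F_{q^r}-rational points. -/
open Finset Polynomial

lemma fiber_card_eq {G H : Type*} [AddCommGroup G] [AddCommGroup H] [Fintype G]
    [DecidableEq G] [DecidableEq H]
    (g : G →+ H) (y : H) (b0 : G) (hb0 : g b0 = y) :
    (Finset.univ.filter (fun b => g b = y)).card
      = (Finset.univ.filter (fun b => g b = 0)).card := by
  apply Finset.card_bij' (fun b _ => b - b0) (fun c _ => c + b0)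
  · intro b hb; simp only [mem_filter, mem_univ, true_and] at *
    simp [map_sub, hb, hb0]
  · intro c hc; simp only [mem_filter, mem_univ, true_and] at *
    simp [map_add, hc, hb0]
  · intro b _; simp
  · intro c _; simp

/-- The norm-trace curve `Tr(y) = Norm(x)` has exactly `q^(2r-1)` affine
`F_{q^r}`-rational points. -/
theorem card_norm_trace_curve {F : Type*} [Field F] [Fintype F] [DecidableEq F]
    (q r : ℕ) (hq : ∃ p k : ℕ, p.Prime ∧ 0 < k ∧ q = p ^ k) (hr : 2 ≤ r)
    (hcard : Fintype.card F = q ^ r) :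
    (Finset.univ.filter
        (fun p : F × F =>
          ∑ i ∈ Finset.range r, p.2 ^ q ^ i = p.1 ^ ((q ^ r - 1) / (q - 1)))).card
      = q ^ (2 * r - 1) := by
  obtain ⟨p, k, hp, hk, rfl⟩ := hq
  set q := p ^ k with hqdef
  have hq2 : 2 ≤ q := by
    calc 2 ≤ p := hp.two_le
    _ = p ^ 1 := (pow_one p).symm
    _ ≤ p ^ k := Nat.pow_le_pow_right hp.pos hk
  have hq1 : 1 ≤ q := le_trans (by norm_num) hq2
  -- characteristic
  have hchar : CharP F p := by
    have h0 : (Fintype.card F : F) = 0 := FiniteField.cast_card_eq_zero F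
    have hdvd : ringChar F ∣ Fintype.card F := (ringChar.spec F _).mp h0
    rw [hcard] at hdvd
    have hrc : ringChar F = p := by
      have hprime : (ringChar F).Prime := CharP.char_is_prime F (ringChar F)
      have : ringChar F ∣ p := hprime.dvd_of_dvd_pow (by rwa [hqdef, ← pow_mul] at hdvd)
      exact (Nat.prime_dvd_prime_iff_eq hprime hp).mp this
    rw [← hrc]; exact ringChar.charP F
  haveI := hchar
  haveI : ExpChar F p := ExpChar.prime hp
  -- the trace map as an additive hom
  set g : F →+ F := ∑ i ∈ Finset.range r, (iterateFrobenius F p (k * i)).toAddMonoidHom with hgdef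
  have hg : ∀ b : F, g b = ∑ i ∈ Finset.range r, b ^ q ^ i := by
    intro b
    rw [hgdef, AddMonoidHom.finset_sum_apply]
    refine Finset.sum_congr rfl fun i _ => ?_
    simp only [RingHom.toAddMonoidHom_eq_coe, AddMonoidHom.coe_coe, iterateFrobenius_def]
    rw [hqdef, ← pow_mul]
  -- cardinalities
  set K := (Finset.univ.filter (fun b : F => g b = 0)).card with hKdef
  have hr1 : 1 ≤ r := le_trans (by norm_num) hr
  -- kernel bound via polynomial roots
  set P : Polynomial F := ∑ i ∈ Finset.range r, X ^ q ^ i with hPdef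
  have hPne : P ≠ 0 := by
    have hcoeff : P.coeff (q ^ (r - 1)) = 1 := by
      rw [hPdef, finset_sum_coeff]
      rw [Finset.sum_eq_single (r - 1)]
      · simp
      · intro i hi hne
        rw [coeff_X_pow, if_neg]
        exact fun h => hne (Nat.pow_right_injective hq2 h.symm)
      · intro h; exact absurd (Finset.mem_range.mpr (by omega)) h
    intro h; rw [h] at hcoeff; simp at hcoeff
  have hPdeg : P.natDegree ≤ q ^ (r - 1) := by
    rw [hPdef]
    refine le_trans (Polynomial.natDegree_sum_le _ _) ?_
    rw [Finset.fold_max_le]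
    refine ⟨Nat.zero_le _, fun i hi => ?_⟩
    rw [Function.comp_apply, natDegree_X_pow]
    exact Nat.pow_le_pow_right (by omega) (by simp at hi; omega)
  have hK_le : K ≤ q ^ (r - 1) := by
    refine le_trans (le_trans (Finset.card_le_card ?_) (Multiset.toFinset_card_le P.roots))
      (le_trans (Polynomial.card_roots' P) hPdeg)
    intro b hb
    simp only [mem_filter, mem_univ, true_and] at hb
    rw [Multiset.mem_toFinset, Polynomial.mem_roots hPne]
    rw [IsRoot.def, hPdef]
    simp only [eval_finset_sum, eval_pow, eval_X]
    rw [← hg b, hb]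
  -- image is contained in fixed points of x ↦ x^q
  set I := (Finset.univ.image g).card with hIdef
  have hfix : ∀ b : F, (g b) ^ q = g b := by
    intro b
    have hbq : b ^ q ^ r = b := by
      rw [← hcard]; exact FiniteField.pow_card b
    have h1 : (g b) ^ q = ∑ i ∈ Finset.range r, b ^ q ^ (i + 1) := by
      have : (g b) ^ q = iterateFrobenius F p k (g b) := by
        rw [iterateFrobenius_def, hqdef]
      rw [this, hg, map_sum]
      refine Finset.sum_congr rfl fun i _ => ?_
      rw [map_pow, iterateFrobenius_def, ← hqdef, ← pow_mul, ← pow_succ']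
    rw [h1, hg]
    have h2 := Finset.sum_range_succ' (fun i => b ^ q ^ i) r
    have h3 := Finset.sum_range_succ (fun i => b ^ q ^ i) r
    simp only [pow_zero, pow_one, hbq] at h2 h3
    have := h2.symm.trans h3
    exact add_right_cancel this
  -- bound on fixed points
  set S := (Finset.univ.filter (fun y : F => y ^ q = y)).card with hSdef
  have hS_le : S ≤ q := by
    set Q : Polynomial F := X ^ q - X with hQdef
    have hQne : Q ≠ 0 := by
      have hcoeff : Q.coeff q = 1 := by
        rw [hQdef, coeff_sub, coeff_X_pow, if_pos rfl, Polynomial.coeff_X,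
          if_neg (by omega)]
        simp
      intro h; rw [h] at hcoeff; simp at hcoeff
    have hQdeg : Q.natDegree ≤ q := by
      rw [hQdef]
      refine le_trans (Polynomial.natDegree_sub_le _ _) ?_
      simp
      omega
    refine le_trans (le_trans (Finset.card_le_card ?_) (Multiset.toFinset_card_le Q.roots))
      (le_trans (Polynomial.card_roots' Q) hQdeg)
    intro y hy
    simp only [mem_filter, mem_univ, true_and] at hy
    rw [Multiset.mem_toFinset, Polynomial.mem_roots hQne]
    simp [hQdef, IsRoot.def, hy, sub_eq_zero]
  have himS : Finset.univ.image g ⊆ Finset.univ.filter (fun y : F => y ^ q = y) := by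
    intro y hy
    simp only [mem_image, mem_univ, true_and] at hy
    obtain ⟨b, rfl⟩ := hy
    simp [hfix b]
  -- fibers partition F
  have hprod : I * K = q ^ r := by
    have h := Finset.card_eq_sum_card_image g (Finset.univ : Finset F)
    rw [Finset.card_univ, hcard] at h
    rw [h, Finset.sum_congr rfl (fun y hy => ?_), Finset.sum_const, smul_eq_mul]
    simp only [mem_image, mem_univ, true_and] at hy
    obtain ⟨b0, hb0⟩ := hy
    exact fiber_card_eq g y b0 hb0
  have hK_pos : 0 < K := by
    rw [hKdef]
    refine Finset.card_pos.mpr ⟨0, ?_⟩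
    simp
  have hI_le : I ≤ q := le_trans (Finset.card_le_card himS) hS_le
  have hqq : q * q ^ (r - 1) = q ^ r := by
    rw [← pow_succ']
    congr 1
    omega
  have hq_le_I : q ≤ I := by
    by_contra h
    push_neg at h
    have hlt : I * K < q * q ^ (r - 1) :=
      lt_of_le_of_lt (Nat.mul_le_mul le_rfl hK_le)
        (mul_lt_mul_of_pos_right h (by positivity))
    omega
  have hI : I = q := le_antisymm hI_le hq_le_I
  have hKge : q ^ (r - 1) ≤ K := by
    by_contra h
    push_neg at h
    have hlt : I * K < q * q ^ (r - 1) := by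
      rw [hI]
      exact mul_lt_mul_of_pos_left h (by omega)
    omega
  have hK : K = q ^ (r - 1) := le_antisymm hK_le hKge
  -- image equals fixed points
  have himeq : Finset.univ.image g = Finset.univ.filter (fun y : F => y ^ q = y) :=
    Finset.eq_of_subset_of_card_le himS (by rw [← hIdef, hI]; exact hS_le)
  -- every norm value is attained
  set N := (q ^ r - 1) / (q - 1) with hNdef
  have hNmul : N * (q - 1) = q ^ r - 1 := by
    refine Nat.div_mul_cancel ?_
    have := Nat.sub_dvd_pow_sub_pow q 1 r
    simpa using this
  have hNpos : 0 < N := by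
    have : q - 1 ≤ q ^ r - 1 := by
      have : q ≤ q ^ r := Nat.le_self_pow (by omega) q
      omega
    rw [hNdef]
    exact Nat.div_pos this (by omega)
  have hnorm : ∀ a : F, ∃ b : F, g b = a ^ N := by
    intro a
    have hmem : a ^ N ∈ Finset.univ.filter (fun y : F => y ^ q = y) := by
      simp only [mem_filter, mem_univ, true_and]
      rcases eq_or_ne a 0 with rfl | ha
      · rw [zero_pow (by omega), zero_pow (by omega)]
      · have h1 : a ^ (q ^ r - 1) = 1 := by
          rw [← hcard]; exact FiniteField.pow_card_sub_one_eq_one a ha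
        have : (a ^ N) ^ q = a ^ N * a ^ (N * (q - 1)) := by
          rw [← pow_mul, ← pow_add]
          congr 1
          have : N * q = N + N * (q - 1) := by
            have : N * q = N * 1 + N * (q - 1) := by
              rw [← Nat.mul_add]
              congr 1
              omega
            omega
          omega
        rw [this, hNmul, h1, mul_one]
    rw [← himeq] at hmem
    simp only [mem_image, mem_univ, true_and] at hmem
    exact hmem
  -- final count
  have hsplit : (Finset.univ.filter
        (fun pr : F × F =>
          ∑ i ∈ Finset.range r, pr.2 ^ q ^ i = pr.1 ^ N)).card
      = ∑ a : F, (Finset.univ.filter (fun b : F => g b = a ^ N)).card := by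
    rw [Finset.card_eq_sum_card_fiberwise (f := Prod.fst) (t := Finset.univ)
      (fun x _ => Finset.mem_univ _)]
    refine Finset.sum_congr rfl fun a _ => ?_
    refine Finset.card_bij' (fun pr _ => pr.2) (fun b _ => (a, b)) ?_ ?_ ?_ ?_
    · intro pr hpr
      simp only [Finset.mem_filter, mem_univ, true_and] at hpr ⊢
      obtain ⟨h1, h2⟩ := hpr
      rw [hg, ← h2]
      exact h1
    · intro b hb
      simp only [Finset.mem_filter, mem_univ, true_and] at hb ⊢
      refine ⟨?_, trivial⟩
      rw [← hg b]
      exact hb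
    · intro pr hpr
      simp only [Finset.mem_filter, mem_univ, true_and] at hpr
      exact Prod.ext hpr.2.symm rfl
    · intro b _
      rfl
  have hfib : ∀ a : F, (Finset.univ.filter (fun b : F => g b = a ^ N)).card = K := by
    intro a
    obtain ⟨b0, hb0⟩ := hnorm a
    rw [fiber_card_eq g (a ^ N) b0 hb0]
  rw [hsplit]
  calc ∑ a : F, (Finset.univ.filter (fun b : F => g b = a ^ N)).card
      = ∑ _a : F, K := Finset.sum_congr rfl (fun a _ => hfib a)
    _ = Fintype.card F * K := by rw [Finset.sum_const, Finset.card_univ, smul_eq_mul]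
    _ = q ^ (2 * r - 1) := by
        rw [hcard, hK, ← pow_add]
        congr 1
        omega
end

section
/- For the norm-trace curve X_{q,r} over F_{q^r} and a non-horizontal line L_{α,β}: y = αx + β with α ≠ 0, the number of affine F_{q^r}-rational intersection points n_{q,r}(α,β) depends only on Tr(β) and Norm(α). -/
/-!
Since `y ↦ y ^ q` is additive in characteristic `p`, the trace `Tr` is additive. Projecting the
intersection points to their first coordinate and substituting `u = α a`, they correspond to the
solutions `u` of `Tr u + Tr β = u ^ N / Norm α`, where `N = (q ^ r - 1) / (q - 1)`; this equation
involves `α` and `β` only through `Norm α = α ^ N` and `Tr β`.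
-/

open Finset

/-- For `q = p ^ k` and `#R = q ^ r` this is the trace `Tr` of `R` over `𝔽_q`. -/
def frobeniusTrace (R : Type*) [CommSemiring R] (p : ℕ) [ExpChar R p] (k r : ℕ) : R →+ R where
  toFun x := ∑ i ∈ range r, x ^ (p ^ k) ^ i
  map_zero' := by simp [(expChar_pos R p).ne']
  map_add' x y := by simp only [← sum_add_distrib, ← pow_mul, add_pow_expChar_pow]

theorem card_filter_graph {A B : Type*} [Fintype A] [Fintype B] [DecidableEq B] (f : A → B)
    (P : A × B → Prop) [DecidablePred P] :
    #{x : A × B | x.2 = f x.1 ∧ P x} = #{a : A | P (a, f a)} :=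
  card_nbij' Prod.fst (fun a => (a, f a))
    (fun x hx => by
      simp only [coe_filter, mem_univ, true_and, Set.mem_ofPred_eq] at hx ⊢
      rw [← hx.1]
      exact hx.2)
    (fun a ha => by simpa using ha)
    (fun x hx => by simp_all [Prod.ext_iff])
    (fun a _ => rfl)

theorem card_line_inter_eq {F : Type*} [Field F] [Fintype F] [DecidableEq F] (T : F →+ F)
    (n : ℕ) {α : F} (hα : α ≠ 0) (β : F) :
    #{x : F × F | x.2 = α * x.1 + β ∧ T x.2 = x.1 ^ n} =
      #{u : F | T u + T β = u ^ n / α ^ n} := by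
  rw [card_filter_graph (fun a => α * a + β) (fun x => T x.2 = x.1 ^ n)]
  refine card_equiv (Equiv.mulLeft₀ α hα) fun a => ?_
  simp [mul_pow, mul_div_cancel_left₀ _ (pow_ne_zero n hα)]

theorem intersection_count_depends_only_on_norm_trace_general {F : Type*} [Field F] [Fintype F]
    [DecidableEq F] (q r : ℕ) (hq : ∃ p k : ℕ, p.Prime ∧ 0 < k ∧ q = p ^ k)
    (hcard : Fintype.card F = q ^ r) (α β α' β' : F) (hα : α ≠ 0) (hα' : α' ≠ 0)
    (hnorm : α ^ ((q ^ r - 1) / (q - 1)) = α' ^ ((q ^ r - 1) / (q - 1)))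
    (htr : ∑ i ∈ Finset.range r, β ^ q ^ i = ∑ i ∈ Finset.range r, β' ^ q ^ i) :
    (Finset.univ.filter
        (fun p : F × F => p.2 = α * p.1 + β ∧
          ∑ i ∈ Finset.range r, p.2 ^ q ^ i = p.1 ^ ((q ^ r - 1) / (q - 1)))).card =
    (Finset.univ.filter
        (fun p : F × F => p.2 = α' * p.1 + β' ∧
          ∑ i ∈ Finset.range r, p.2 ^ q ^ i = p.1 ^ ((q ^ r - 1) / (q - 1)))).card := by
  obtain ⟨p, k, hp, -, rfl⟩ := hq
  have : Fact p.Prime := ⟨hp⟩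
  have : CharP F p := charP_of_card_eq_prime_pow (hcard.trans (pow_mul p k r).symm)
  have hTr (y : F) : ∑ i ∈ range r, y ^ (p ^ k) ^ i = frobeniusTrace F p k r y := rfl
  simp only [hTr] at htr ⊢
  rw [card_line_inter_eq _ _ hα, card_line_inter_eq _ _ hα', hnorm, htr]

/-- The number of affine `F_{q^r}`-rational points of the norm-trace curve
on the line `y = αx + β` (with `α ≠ 0`) depends only on `Norm(α)` and `Tr(β)`. -/
theorem intersection_count_depends_only_on_norm_trace {F : Type*} [Field F] [Fintype F]
    [DecidableEq F] (q r : ℕ) (hq : ∃ p k : ℕ, p.Prime ∧ 0 < k ∧ q = p ^ k) (hr : 2 ≤ r)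
    (hcard : Fintype.card F = q ^ r) (α β α' β' : F) (hα : α ≠ 0) (hα' : α' ≠ 0)
    (hnorm : α ^ ((q ^ r - 1) / (q - 1)) = α' ^ ((q ^ r - 1) / (q - 1)))
    (htr : ∑ i ∈ Finset.range r, β ^ q ^ i = ∑ i ∈ Finset.range r, β' ^ q ^ i) :
    (Finset.univ.filter
        (fun p : F × F => p.2 = α * p.1 + β ∧
          ∑ i ∈ Finset.range r, p.2 ^ q ^ i = p.1 ^ ((q ^ r - 1) / (q - 1)))).card =
    (Finset.univ.filter
        (fun p : F × F => p.2 = α' * p.1 + β' ∧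
          ∑ i ∈ Finset.range r, p.2 ^ q ^ i = p.1 ^ ((q ^ r - 1) / (q - 1)))).card :=
  intersection_count_depends_only_on_norm_trace_general q r hq hcard α β α' β' hα hα' hnorm htr
end

section
/- For q = 2 and r ≥ 2, any non-horizontal line y = αx + β (α ≠ 0) over F_{2^r} intersects the norm-trace curve X_{2,r} in 2^{r−1} − 1 affine F_{2^r}-points if Tr(β) ≠ 0, and in 2^{r−1} + 1 affine F_{2^r}-points if Tr(β) = 0. -/
/-!
Since `#F = 2 ^ r`, the field `F` has characteristic `2` and degree `r` over `𝔽₂`, so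
`∑ i < r, y ^ 2 ^ i` is the absolute trace `Tr y ∈ 𝔽₂`. The trace is a surjective `𝔽₂`-linear
form, so `Tr = 1` has `2 ^ (r - 1)` solutions. As `α ≠ 0`, a point of the line is determined by
its `y`, and `x = 0` exactly when `y = β`; since `x ^ (2 ^ r - 1)` is `0` at `x = 0` and `1`
elsewhere, the line meets the curve in those `y` with `Tr y = 1 ↔ y ≠ β`, i.e. in `{Tr = 1}`
with `β` removed (if `Tr β = 1`) or added (if `Tr β = 0`).
-/

open Finset

namespace FiniteField

variable {K L : Type*} [Field K] [Fintype K] [DecidableEq K]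

theorem pow_card_sub_one (a : K) : a ^ (Fintype.card K - 1) = if a = 0 then 0 else 1 := by
  split_ifs with ha
  · rw [ha, zero_pow (Nat.sub_ne_zero_of_lt Fintype.one_lt_card)]
  · exact pow_card_sub_one_eq_one a ha

variable [Field L] [Fintype L] [Algebra K L]

theorem card_mul_card_trace_fiber (c : K) :
    Fintype.card K * #{x : L | Algebra.trace K L x = c} = Fintype.card L := by
  have hfib (d : K) : #{x : L | Algebra.trace K L x = d} = #{x : L | Algebra.trace K L x = c} :=
    AddMonoidHom.card_fiber_eq_of_mem_range (Algebra.trace K L).toAddMonoidHom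
      (Algebra.trace_surjective K L d) (Algebra.trace_surjective K L c)
  calc Fintype.card K * #{x : L | Algebra.trace K L x = c}
      = ∑ d : K, #{x : L | Algebra.trace K L x = d} := by simp [hfib]
    _ = Fintype.card L := (card_eq_sum_card_fiberwise (fun _ _ => mem_univ _)).symm

end FiniteField

theorem Module.finrank_eq_of_card_eq_pow {K V : Type*} [DivisionRing K] [Fintype K]
    [AddCommGroup V] [Module K V] [Fintype V] {r : ℕ}
    (h : Fintype.card V = Fintype.card K ^ r) : Module.finrank K V = r :=
  Nat.pow_right_injective Fintype.one_lt_card (Module.card_eq_pow_finrank.symm.trans h)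

theorem Finset.card_filter_mem_iff_ne {α : Type*} [Fintype α] [DecidableEq α] (s : Finset α)
    (a : α) : #{x | x ∈ s ↔ x ≠ a} = if a ∈ s then #s - 1 else #s + 1 := by
  split_ifs with ha
  · rw [← card_erase_of_mem ha]
    congr 1; ext x; simp only [mem_filter, mem_univ, true_and, mem_erase]; grind
  · rw [← card_insert_of_notMem ha]
    congr 1; ext x; simp only [mem_filter, mem_univ, true_and, mem_insert]; grind

theorem card_filter_on_line {F : Type*} [Field F] [Fintype F] [DecidableEq F]
    {α : F} (hα : α ≠ 0) (β : F) (Q : F → F → Prop) [∀ x y, Decidable (Q x y)] :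
    #{p : F × F | p.2 = α * p.1 + β ∧ Q p.1 p.2} = #{y : F | Q (α⁻¹ * (y - β)) y} := by
  apply card_nbij' Prod.snd (fun y => (α⁻¹ * (y - β), y))
  · rintro ⟨x, y⟩ hp
    simp only [coe_filter, mem_univ, true_and, Set.mem_ofPred_eq] at hp ⊢
    obtain ⟨rfl, hQ⟩ := hp
    simpa [hα] using hQ
  · intro y hy
    simp only [coe_filter, mem_univ, true_and, Set.mem_ofPred_eq] at hy ⊢
    simpa [hα] using hy
  · rintro ⟨x, y⟩ hp
    simp only [coe_filter, mem_univ, true_and, Set.mem_ofPred_eq] at hp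
    simp [hp.1, hα]
  · intro y _
    rfl

section BinaryTrace

variable {F : Type*} [Field F] [Fintype F] [DecidableEq F] [Algebra (ZMod 2) F]

local notation "Tr" => Algebra.trace (ZMod 2) F

theorem card_line_inter_trace_curve {α : F} (hα : α ≠ 0) (β : F) :
    #{p : F × F | p.2 = α * p.1 + β ∧
      algebraMap (ZMod 2) F (Tr p.2) = p.1 ^ (Fintype.card F - 1)} =
      if Tr β = 1 then #{y : F | Tr y = 1} - 1 else #{y : F | Tr y = 1} + 1 := by
  have hcond (y : F) : algebraMap (ZMod 2) F (Tr y) = (α⁻¹ * (y - β)) ^ (Fintype.card F - 1) ↔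
      (y ∈ ({y : F | Tr y = 1} : Finset F) ↔ y ≠ β) := by
    have hbin : ∀ t : ZMod 2, t = 0 ↔ t ≠ 1 := by decide
    rw [FiniteField.pow_card_sub_one]
    by_cases hy : y = β <;> simp [hy, hα, sub_eq_zero, hbin]
  rw [card_filter_on_line hα β
      fun x y => algebraMap (ZMod 2) F (Tr y) = x ^ (Fintype.card F - 1),
    filter_congr (fun y _ => hcond y), card_filter_mem_iff_ne]
  simp

end BinaryTrace

theorem binary_norm_trace_intersection_general {F : Type*} [Field F] [Fintype F] [DecidableEq F]
    (r : ℕ) (hcard : Fintype.card F = 2 ^ r) (α β : F) (hα : α ≠ 0) :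
    (((∑ i ∈ Finset.range r, β ^ 2 ^ i) ≠ 0 →
      (Finset.univ.filter
          (fun p : F × F => p.2 = α * p.1 + β ∧
            ∑ i ∈ Finset.range r, p.2 ^ 2 ^ i = p.1 ^ (2 ^ r - 1))).card
        = 2 ^ (r - 1) - 1) ∧
    ((∑ i ∈ Finset.range r, β ^ 2 ^ i) = 0 →
      (Finset.univ.filter
          (fun p : F × F => p.2 = α * p.1 + β ∧
            ∑ i ∈ Finset.range r, p.2 ^ 2 ^ i = p.1 ^ (2 ^ r - 1))).card
        = 2 ^ (r - 1) + 1)) := by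
  have : CharP F 2 := charP_of_card_eq_prime_pow hcard
  let _ := ZMod.algebra F 2
  have hrank : Module.finrank (ZMod 2) F = r :=
    Module.finrank_eq_of_card_eq_pow (by rw [hcard, ZMod.card])
  have htrace (z : F) :
      ∑ i ∈ range r, z ^ 2 ^ i = algebraMap (ZMod 2) F (Algebra.trace (ZMod 2) F z) := by
    simpa [hrank] using (FiniteField.algebraMap_trace_eq_sum_pow (ZMod 2) F z).symm
  have hfiber : #{y : F | Algebra.trace (ZMod 2) F y = 1} = 2 ^ (r - 1) := by
    have hr : r ≠ 0 := by
      rintro rfl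
      exact Fintype.one_lt_card.ne' hcard
    have hcount := FiniteField.card_mul_card_trace_fiber (K := ZMod 2) (L := F) 1
    rw [ZMod.card, hcard, ← Nat.sub_one_add_one hr, pow_succ'] at hcount
    exact Nat.eq_of_mul_eq_mul_left two_pos hcount
  simp only [htrace, ne_eq, map_eq_zero, ← hcard, card_line_inter_trace_curve hα, hfiber]
  have hbin : ∀ t : ZMod 2, ¬t = 0 ↔ t = 1 := by decide
  refine ⟨fun h => ?_, fun h => ?_⟩
  · rw [if_pos ((hbin _).mp h)]
  · rw [h, if_neg zero_ne_one]

/-- For `q = 2`, `r ≥ 2`, a line `y = αx + β` with `α ≠ 0` over `F_{2^r}`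
meets the norm-trace curve `X_{2,r} : ∑_{i<r} y^(2^i) = x^(2^r - 1)` in `2^(r-1) - 1`
affine points if `Tr(β) ≠ 0`, and in `2^(r-1) + 1` affine points if `Tr(β) = 0`. -/
theorem binary_norm_trace_intersection {F : Type*} [Field F] [Fintype F] [DecidableEq F]
    (r : ℕ) (hr : 2 ≤ r) (hcard : Fintype.card F = 2 ^ r) (α β : F) (hα : α ≠ 0) :
    (((∑ i ∈ Finset.range r, β ^ 2 ^ i) ≠ 0 →
      (Finset.univ.filter
          (fun p : F × F => p.2 = α * p.1 + β ∧
            ∑ i ∈ Finset.range r, p.2 ^ 2 ^ i = p.1 ^ (2 ^ r - 1))).card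
        = 2 ^ (r - 1) - 1) ∧
    ((∑ i ∈ Finset.range r, β ^ 2 ^ i) = 0 →
      (Finset.univ.filter
          (fun p : F × F => p.2 = α * p.1 + β ∧
            ∑ i ∈ Finset.range r, p.2 ^ 2 ^ i = p.1 ^ (2 ^ r - 1))).card
        = 2 ^ (r - 1) + 1)) :=
  binary_norm_trace_intersection_general r hcard α β hα
end

section
/- For r ≥ 2 and α, β ∈ F_{2^r} with α ≠ 0 and Tr(β) = 1, gcd(m_{α,β}(x), x^{2^r} − x) has degree 2^{r−1} − 1, and in fact equals (up to unit) α^{2^{r−1}} x^{2^{r−1}−1} + ... + α. -/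
open Polynomial

/-- For `r ≥ 2`, `α, β ∈ F_{2^r}` with `α ≠ 0` and `Tr(β) = 1`, the gcd of
`m_{α,β}(x) = x^(2^r - 1) + ∑_{i<r} (αx)^(2^i) + 1` with `x^(2^r) - x` is (up to a unit)
`∑_{i<r} α^(2^i) x^(2^i - 1)`, which has degree `2^(r-1) - 1`. -/
theorem binary_gcd_trace_one {F : Type*} [Field F] [Fintype F] [DecidableEq F]
    (r : ℕ) (hr : 2 ≤ r) (hcard : Fintype.card F = 2 ^ r) (α β : F) (hα : α ≠ 0)
    (htr : (∑ i ∈ Finset.range r, β ^ 2 ^ i) = 1) :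
    Associated
      (EuclideanDomain.gcd
        ((X : Polynomial F) ^ (2 ^ r - 1) + (∑ i ∈ Finset.range r, (C α * X) ^ 2 ^ i)
          + 1)
        ((X : Polynomial F) ^ 2 ^ r - X))
      (∑ i ∈ Finset.range r, C (α ^ 2 ^ i) * (X : Polynomial F) ^ (2 ^ i - 1)) ∧
    (EuclideanDomain.gcd
        ((X : Polynomial F) ^ (2 ^ r - 1) + (∑ i ∈ Finset.range r, (C α * X) ^ 2 ^ i)
          + 1)
        ((X : Polynomial F) ^ 2 ^ r - X)).natDegree = 2 ^ (r - 1) - 1 := by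
  classical
  -- characteristic 2
  have h2F : (2 : F) = 0 := by
    have hc : ((Fintype.card F : ℕ) : F) = 0 := FiniteField.cast_card_eq_zero F
    rw [hcard] at hc
    push_cast at hc
    exact pow_eq_zero_iff (by positivity) |>.mp hc
  haveI : CharP F 2 := (CharP.charP_iff_prime_eq_zero Nat.prime_two).mpr h2F
  have h2p : (2 : Polynomial F) = 0 := by
    rw [show (2 : Polynomial F) = C (2 : F) from (map_ofNat (C : F →+* Polynomial F) 2).symm,
      h2F, map_zero]
  set U : Polynomial F := ∑ i ∈ Finset.range r, (C α * X) ^ 2 ^ i with hU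
  set G : Polynomial F := ∑ i ∈ Finset.range r, C (α ^ 2 ^ i) * X ^ (2 ^ i - 1) with hG
  set q : Polynomial F := X ^ 2 ^ r - X with hq
  set m : Polynomial F := X ^ (2 ^ r - 1) + U + 1 with hm
  set d : Polynomial F := EuclideanDomain.gcd m q with hd
  -- X * G = U
  have hXG : X * G = U := by
    rw [hG, hU, Finset.mul_sum]
    refine Finset.sum_congr rfl fun i _ => ?_
    have h1 : 2 ^ i - 1 + 1 = 2 ^ i := Nat.succ_pred_eq_of_pos (pow_pos two_pos i)
    calc X * (C (α ^ 2 ^ i) * X ^ (2 ^ i - 1))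
        = C (α ^ 2 ^ i) * X ^ (2 ^ i - 1 + 1) := by ring
      _ = (C α * X) ^ 2 ^ i := by rw [h1, mul_pow, C_pow]
  -- α ^ (2^r) = α
  have hαr : α ^ 2 ^ r = α := by rw [← hcard]; exact FiniteField.pow_card α
  -- key identity : U^2 - U = C α * q
  have hkey : U ^ 2 - U = C α * q := by
    have hU2 : U ^ 2 = ∑ i ∈ Finset.range r, (C α * X) ^ 2 ^ (i + 1) := by
      rw [hU, sum_pow_char]
      exact Finset.sum_congr rfl fun i _ => by rw [← pow_mul, pow_succ]
    have htel : U ^ 2 - U = (C α * X) ^ 2 ^ r - (C α * X) ^ 2 ^ 0 := by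
      rw [hU2, hU, ← Finset.sum_sub_distrib]
      exact Finset.sum_range_sub (fun i => (C α * X) ^ 2 ^ i) r
    rw [htel, hq, pow_zero, pow_one, mul_pow, ← C_pow, hαr, mul_sub]
  -- 2^r - 1 + 1 = 2^r
  have hx1 : 2 ^ r - 1 + 1 = 2 ^ r := Nat.succ_pred_eq_of_pos (pow_pos two_pos r)
  have e1 : (X : Polynomial F) ^ 2 ^ r = X ^ (2 ^ r - 1) * X := by rw [← pow_succ, hx1]
  -- G * (X * G - 1) = C α * (X ^ (2^r - 1) - 1)
  have hcancel : G * (X * G - 1) = C α * (X ^ (2 ^ r - 1) - 1) := by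
    have hXne : (X : Polynomial F) ≠ 0 := X_ne_zero
    apply mul_left_cancel₀ hXne
    have : U ^ 2 - U = C α * q := hkey
    rw [hq, e1] at this
    calc X * (G * (X * G - 1)) = (X * G) * (X * G - 1) := by ring
      _ = U * (U - 1) := by rw [hXG]
      _ = U ^ 2 - U := by ring
      _ = C α * (X ^ (2 ^ r - 1) * X - X) := this
      _ = X * (C α * (X ^ (2 ^ r - 1) - 1)) := by ring
  -- G divides q
  have hGq : G ∣ q := by
    have h1 : C α * q = G * (X * (U - 1)) := by
      have : U * (U - 1) = C α * q := by rw [← hkey]; ring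
      rw [← this, ← hXG]; ring
    have h2 : G ∣ C α * q := ⟨X * (U - 1), h1⟩
    exact (IsUnit.dvd_mul_left (isUnit_C.mpr hα.isUnit)).mp h2
  -- G divides m
  have hGm : G ∣ m := by
    have h1 : C α * m = G * ((X * G - 1) + C α * X) := by
      rw [hm]
      calc C α * (X ^ (2 ^ r - 1) + U + 1)
          = C α * (X ^ (2 ^ r - 1) - 1) + C α * U + 2 * C α := by ring
        _ = G * (X * G - 1) + C α * (X * G) + 0 * C α := by rw [hcancel, hXG, h2p]
        _ = G * ((X * G - 1) + C α * X) := by ring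
    have h2 : G ∣ C α * m := ⟨(X * G - 1) + C α * X, h1⟩
    exact (IsUnit.dvd_mul_left (isUnit_C.mpr hα.isUnit)).mp h2
  -- G divides d
  have hGd : G ∣ d := EuclideanDomain.dvd_gcd hGm hGq
  -- d divides G
  have hdm : d ∣ m := EuclideanDomain.gcd_dvd_left m q
  have hdq : d ∣ q := EuclideanDomain.gcd_dvd_right m q
  have hdX2G : d ∣ X ^ 2 * G := by
    have h1 : X ^ 2 * G = X * m - q := by
      rw [hm, hq, e1, ← hXG]
      linear_combination (-(X : Polynomial F)) * h2p
    rw [h1]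
    exact dvd_sub (Dvd.dvd.mul_left hdm X) hdq
  -- d is coprime to X
  have hx2 : 2 ^ r - 1 - 1 + 1 = 2 ^ r - 1 := by
    have : 2 ≤ 2 ^ r := by
      calc 2 = 2 ^ 1 := (pow_one 2).symm
      _ ≤ 2 ^ r := Nat.pow_le_pow_right (by norm_num) (by omega)
    omega
  have hcopXm : IsCoprime (X : Polynomial F) m := by
    refine ⟨-(X ^ (2 ^ r - 1 - 1) + G), 1, ?_⟩
    have e2 : (X : Polynomial F) ^ (2 ^ r - 1) = X ^ (2 ^ r - 1 - 1) * X := by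
      rw [← pow_succ, hx2]
    rw [hm, e2, ← hXG]
    ring
  have hcopdX2 : IsCoprime d ((X : Polynomial F) ^ 2) :=
    (hcopXm.symm.of_isCoprime_of_dvd_left hdm).pow_right
  have hdG : d ∣ G := hcopdX2.dvd_of_dvd_mul_left hdX2G
  have hassoc : Associated d G := associated_of_dvd_dvd hdG hGd
  refine ⟨hassoc, ?_⟩
  -- degree computation
  have hGdeg : G.natDegree = 2 ^ (r - 1) - 1 := by
    obtain ⟨s, rfl⟩ : ∃ s, r = s + 1 := ⟨r - 1, by omega⟩
    have hs1 : 1 ≤ s := by omega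
    rw [hG, Finset.sum_range_succ]
    have hlt : (∑ i ∈ Finset.range s, C (α ^ 2 ^ i) * (X : Polynomial F) ^ (2 ^ i - 1)).natDegree
        < (C (α ^ 2 ^ s) * (X : Polynomial F) ^ (2 ^ s - 1)).natDegree := by
      rw [natDegree_C_mul_X_pow _ _ (pow_ne_zero _ hα)]
      refine lt_of_le_of_lt (natDegree_sum_le_of_forall_le _ _ fun i hi => ?_)
        (show 2 ^ (s - 1) - 1 < 2 ^ s - 1 by
          have h1 : 2 ^ (s - 1) < 2 ^ s := Nat.pow_lt_pow_right (by norm_num) (by omega)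
          have h2 : 1 ≤ 2 ^ (s - 1) := Nat.one_le_two_pow
          omega)
      refine le_trans (natDegree_C_mul_le _ _) ?_
      refine le_trans (natDegree_X_pow_le _) ?_
      have hi' : i < s := Finset.mem_range.mp hi
      have h3 : 2 ^ i ≤ 2 ^ (s - 1) := Nat.pow_le_pow_right (by norm_num) (by omega)
      omega
    rw [natDegree_add_eq_right_of_natDegree_lt hlt,
      natDegree_C_mul_X_pow _ _ (pow_ne_zero _ hα)]
    simp
  exact (natDegree_eq_of_degree_eq (degree_eq_degree_of_associated hassoc)).trans hGdeg
end

section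
/- For the norm-trace curve over F_{q^r}, the evaluation vectors of the monomials x^a y^b at all q^{2r−1} affine F_{q^r}-points, for 0 ≤ a ≤ (q^r−1)/(q−1) − 1 and 0 ≤ b ≤ q^{r−1} − 1, are linearly independent over F_{q^r}. -/
open Polynomial Finset

/-- If a nonzero polynomial of degree at most `d` vanishes on a finset `S`, then `#S ≤ d`. -/
lemma aux_card_le_of_eval_zero {F : Type*} [Field F] {P : F[X]} {S : Finset F} {d : ℕ}
    (hS : ∀ z ∈ S, P.eval z = 0) (hP : P ≠ 0) (hd : P.natDegree ≤ d) : S.card ≤ d := by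
  by_contra h
  exact hP (Polynomial.eq_zero_of_natDegree_lt_card_of_eval_eq_zero' P S hS
    (lt_of_le_of_lt hd (by omega)))

/-- Extracting a coefficient from a polynomial written in the monomial basis indexed by `Fin n`. -/
lemma aux_coeff_extract {F : Type*} [Field F] {n : ℕ} (c : Fin n → F) (b : Fin n) :
    (∑ i : Fin n, Polynomial.C (c i) * Polynomial.X ^ (i : ℕ)).coeff (b : ℕ) = c b := by
  rw [Polynomial.finset_sum_coeff, Finset.sum_eq_single_of_mem b (Finset.mem_univ b)]
  · simp [Polynomial.coeff_X_pow]
  · intro i _ hib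
    rw [Polynomial.coeff_C_mul, Polynomial.coeff_X_pow]
    rw [if_neg (fun h : (b : ℕ) = (i : ℕ) => hib (Fin.ext h.symm)), mul_zero]

/-- The evaluation vectors of the monomials `x^a y^b`, for
`0 ≤ a < (q^r-1)/(q-1)` and `0 ≤ b < q^(r-1)`, at the affine `F_{q^r}`-points of the
norm-trace curve, are linearly independent over `F_{q^r}`. -/
theorem monomial_evaluations_linearIndependent {F : Type*} [Field F] [Fintype F]
    [DecidableEq F] (q r : ℕ) (hq : ∃ p k : ℕ, p.Prime ∧ 0 < k ∧ q = p ^ k) (hr : 2 ≤ r)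
    (hcard : Fintype.card F = q ^ r) :
    LinearIndependent F
      (fun ab : Fin ((q ^ r - 1) / (q - 1)) × Fin (q ^ (r - 1)) =>
        fun P : {p : F × F //
            ∑ i ∈ Finset.range r, p.2 ^ q ^ i = p.1 ^ ((q ^ r - 1) / (q - 1))} =>
          P.1.1 ^ (ab.1 : ℕ) * P.1.2 ^ (ab.2 : ℕ)) := by
  classical
  obtain ⟨p, k, hp, hk, hqpk⟩ := hq
  have hpp : Fact p.Prime := ⟨hp⟩
  have hq2 : 2 ≤ q := by
    calc 2 ≤ p := hp.two_le
    _ = p ^ 1 := (pow_one p).symm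
    _ ≤ p ^ k := Nat.pow_le_pow_right hp.pos hk
    _ = q := hqpk.symm
  have hq0 : 0 < q := by omega
  -- the characteristic of `F` is `p`
  haveI hcharF : CharP F p := by
    set p' := ringChar F with hp'
    haveI : CharP F p' := ringChar.charP F
    obtain ⟨n, hp'prime, hcard'⟩ := FiniteField.card F p'
    have heq : p' ^ (n : ℕ) = p ^ (k * r) := by
      rw [← hcard', hcard, hqpk, ← pow_mul]
    have hdvd : p ∣ p' := by
      have h1 : p ∣ p' ^ (n : ℕ) := by
        rw [heq]
        exact dvd_pow_self p (by positivity)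
      exact hp.dvd_of_dvd_pow h1
    have : p = p' := ((Nat.prime_dvd_prime_iff_eq hp hp'prime).mp hdvd)
    rw [this]
    exact ringChar.charP F
  have hqi : ∀ i : ℕ, q ^ i = p ^ (k * i) := fun i => by rw [hqpk, ← pow_mul]
  set m := (q ^ r - 1) / (q - 1) with hm
  set n' := q ^ (r - 1) with hn'
  have hn'0 : 0 < n' := by positivity
  set T : F → F := fun y => ∑ i ∈ Finset.range r, y ^ q ^ i with hT
  have hTsub : ∀ a b : F, T (a - b) = T a - T b := by
    intro a b
    simp only [hT, ← Finset.sum_sub_distrib]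
    refine Finset.sum_congr rfl fun i _ => ?_
    rw [hqi i, sub_pow_char_pow]
  have hTadd : ∀ a b : F, T (a + b) = T a + T b := by
    intro a b
    simp only [hT, ← Finset.sum_add_distrib]
    refine Finset.sum_congr rfl fun i _ => ?_
    rw [hqi i, add_pow_char_pow]
  have hpowcard : ∀ z : F, z ^ q ^ r = z := fun z => by
    rw [← hcard]; exact FiniteField.pow_card z
  have hTfix : ∀ z : F, (T z) ^ q = T z := by
    intro z
    have h1 : (T z) ^ q = ∑ i ∈ Finset.range r, z ^ q ^ (i + 1) := by
      rw [hT]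
      simp only [hqpk, sum_pow_char_pow]
      refine Finset.sum_congr rfl fun i _ => ?_
      rw [← hqpk, ← pow_mul, ← pow_succ]
    have h2 : ∑ i ∈ Finset.range (r + 1), z ^ q ^ i
        = (∑ i ∈ Finset.range r, z ^ q ^ (i + 1)) + z ^ q ^ 0 :=
      Finset.sum_range_succ' _ r
    have h3 : ∑ i ∈ Finset.range (r + 1), z ^ q ^ i
        = (∑ i ∈ Finset.range r, z ^ q ^ i) + z ^ q ^ r :=
      Finset.sum_range_succ _ r
    have h0 : z ^ q ^ 0 = z := by rw [pow_zero, pow_one]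
    have h4 : (∑ i ∈ Finset.range r, z ^ q ^ (i + 1)) + z ^ q ^ 0
        = (∑ i ∈ Finset.range r, z ^ q ^ i) + z ^ q ^ 0 := by
      rw [← h2, h3, hpowcard z, h0]
    rw [h1]
    exact add_right_cancel h4
  set K : Finset F := Finset.univ.filter fun y => T y = 0 with hK
  set Fix : Finset F := Finset.univ.filter fun z => z ^ q = z with hFix
  set I : Finset F := Finset.image T Finset.univ with hI
  -- |Fix| ≤ q
  have hFixle : Fix.card ≤ q := by
    refine aux_card_le_of_eval_zero (P := (X : F[X]) ^ q - X) ?_ ?_ ?_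
    · intro z hz
      rw [Finset.mem_filter] at hz
      simp [hz.2]
    · intro h0
      have h1 := congrArg (fun P => Polynomial.coeff P 1) h0
      simp only [Polynomial.coeff_sub, Polynomial.coeff_X_pow, Polynomial.coeff_X_one,
        Polynomial.coeff_zero] at h1
      rw [if_neg (by omega : ¬ 1 = q)] at h1
      simp at h1
    · refine le_trans (Polynomial.natDegree_sub_le _ _) ?_
      rw [Polynomial.natDegree_X_pow, Polynomial.natDegree_X]
      exact max_le le_rfl (by omega)
  -- |K| ≤ q^(r-1)
  have hKle : K.card ≤ n' := by
    refine aux_card_le_of_eval_zero (P := ∑ i ∈ Finset.range r, (X : F[X]) ^ q ^ i) ?_ ?_ ?_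
    · intro z hz
      rw [Finset.mem_filter] at hz
      have : Polynomial.eval z (∑ i ∈ Finset.range r, (X : F[X]) ^ q ^ i) = T z := by
        rw [hT]; simp [Polynomial.eval_finset_sum]
      rw [this, hz.2]
    · intro h0
      have h1 := congrArg (fun P => Polynomial.coeff P (q ^ (r - 1))) h0
      simp only [Polynomial.finset_sum_coeff, Polynomial.coeff_X_pow, Polynomial.coeff_zero] at h1
      rw [Finset.sum_eq_single_of_mem (r - 1) (Finset.mem_range.mpr (by omega))] at h1
      · simp at h1
      · intro i hi hir
        rw [if_neg]
        intro hqq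
        exact hir (Nat.pow_right_injective hq2 hqq.symm)
    · refine Polynomial.natDegree_sum_le_of_forall_le _ _ fun i hi => ?_
      rw [Polynomial.natDegree_X_pow]
      exact Nat.pow_le_pow_right hq0 (by simp at hi; omega)
  -- every fiber of T has the same cardinality as K
  have hfibercard : ∀ c : F, ∀ y0 : F, T y0 = c →
      (Finset.univ.filter fun y => T y = c).card = K.card := by
    intro c y0 hy0
    refine Finset.card_bij' (fun y _ => y - y0) (fun z _ => z + y0) ?_ ?_ ?_ ?_
    · intro y hy
      rw [Finset.mem_filter] at hy ⊢
      refine ⟨Finset.mem_univ _, ?_⟩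
      rw [hTsub, hy.2, hy0, sub_self]
    · intro z hz
      rw [Finset.mem_filter] at hz ⊢
      refine ⟨Finset.mem_univ _, ?_⟩
      rw [hTadd, hz.2, hy0, zero_add]
    · intro y _; ring
    · intro z _; ring
  -- counting: q^r = |I| * |K|
  have hcount : q ^ r = I.card * K.card := by
    have h1 : (Finset.univ : Finset F).card
        = ∑ c ∈ I, (Finset.univ.filter fun y => T y = c).card :=
      Finset.card_eq_sum_card_fiberwise fun x _ => Finset.mem_image_of_mem T (Finset.mem_univ x)
    have h2 : ∑ c ∈ I, (Finset.univ.filter fun y => T y = c).card = ∑ _c ∈ I, K.card := by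
      refine Finset.sum_congr rfl fun c hc => ?_
      obtain ⟨y0, _, hy0⟩ := Finset.mem_image.mp hc
      exact hfibercard c y0 hy0
    calc q ^ r = Fintype.card F := hcard.symm
    _ = (Finset.univ : Finset F).card := Finset.card_univ.symm
    _ = ∑ c ∈ I, (Finset.univ.filter fun y => T y = c).card := h1
    _ = ∑ _c ∈ I, K.card := h2
    _ = I.card * K.card := by rw [Finset.sum_const, smul_eq_mul]
  have hIsub : I ⊆ Fix := by
    intro c hc
    obtain ⟨y0, _, hy0⟩ := Finset.mem_image.mp hc
    rw [Finset.mem_filter]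
    exact ⟨Finset.mem_univ _, by rw [← hy0]; exact hTfix y0⟩
  -- |K| ≥ q^(r-1) and I = Fix
  have hqr : q ^ r = q * n' := by
    rw [hn', ← pow_succ']
    congr 1
    omega
  have hKge : n' ≤ K.card := by
    have h1 : I.card ≤ q := le_trans (Finset.card_le_card hIsub) hFixle
    have h2 : q * n' ≤ q * K.card := by
      calc q * n' = q ^ r := hqr.symm
      _ = I.card * K.card := hcount
      _ ≤ q * K.card := Nat.mul_le_mul_right _ h1
    exact Nat.le_of_mul_le_mul_left h2 hq0
  have hIFix : I = Fix := by
    refine Finset.eq_of_subset_of_card_le hIsub ?_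
    refine le_trans hFixle ?_
    have h2 : q * n' ≤ I.card * n' := by
      calc q * n' = q ^ r := hqr.symm
      _ = I.card * K.card := hcount
      _ ≤ I.card * n' := Nat.mul_le_mul_left _ hKle
    exact Nat.le_of_mul_le_mul_right h2 hn'0
  -- arithmetic facts about m
  have hdvd : (q - 1) ∣ q ^ r - 1 := by
    have := Nat.sub_dvd_pow_sub_pow q 1 r
    simpa using this
  have hmmul : m * (q - 1) = q ^ r - 1 := Nat.div_mul_cancel hdvd
  have hqr1 : 0 < q ^ r := by positivity
  have hm1 : 1 ≤ m := by
    rw [hm]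
    refine (Nat.one_le_div_iff (by omega)).mpr ?_
    have : q ≤ q ^ r := Nat.le_self_pow (by omega) q
    omega
  have hmq : m * q = q ^ r + (m - 1) := by
    have h1 : m * q = m * (q - 1) + m := by
      conv_lhs => rw [show q = (q - 1) + 1 from by omega]
      rw [Nat.mul_succ]
    rw [h1, hmmul]
    omega
  -- x^m is fixed by the Frobenius, hence lies in the image of T
  have hxmFix : ∀ x : F, x ^ m ∈ I := by
    intro x
    rw [hIFix, Finset.mem_filter]
    refine ⟨Finset.mem_univ _, ?_⟩
    rw [← pow_mul, hmq, pow_add, hpowcard x, ← pow_succ']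
    congr 1
    omega
  -- each fiber over x^m has at least q^(r-1) elements
  have hfiber : ∀ x : F, n' ≤ (Finset.univ.filter fun y : F => T y = x ^ m).card := by
    intro x
    obtain ⟨y0, _, hy0⟩ := Finset.mem_image.mp (hxmFix x)
    rw [hfibercard (x ^ m) y0 hy0]
    exact hKge
  -- main argument
  rw [Fintype.linearIndependent_iff]
  intro g hg
  set G : Fin n' → F[X] := fun b => ∑ a : Fin m, Polynomial.C (g (a, b)) * X ^ (a : ℕ) with hG
  have hGeval : ∀ x : F, ∀ b : Fin n', (G b).eval x = 0 := by
    intro x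
    set H : F[X] := ∑ b : Fin n', Polynomial.C ((G b).eval x) * X ^ (b : ℕ) with hH
    have hHdeg : H.natDegree ≤ n' - 1 := by
      refine Polynomial.natDegree_sum_le_of_forall_le _ _ fun b _ => ?_
      refine le_trans (Polynomial.natDegree_C_mul_X_pow_le _ _) ?_
      have := b.isLt
      omega
    have hHeval : ∀ y ∈ (Finset.univ.filter fun y : F => T y = x ^ m), H.eval y = 0 := by
      intro y hy
      rw [Finset.mem_filter] at hy
      have hy2 : ∑ i ∈ Finset.range r, y ^ q ^ i = x ^ ((q ^ r - 1) / (q - 1)) := hy.2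
      have key : ∑ b : Fin n', ∑ a : Fin m, g (a, b) * (x ^ (a : ℕ) * y ^ (b : ℕ)) = 0 := by
        have h0 := congrFun hg ⟨(x, y), hy2⟩
        simp only [Finset.sum_apply, Pi.zero_apply, smul_eq_mul] at h0
        rw [← h0, Fintype.sum_prod_type]
        exact Finset.sum_comm
      calc H.eval y = ∑ b : Fin n', (∑ a : Fin m, g (a, b) * x ^ (a : ℕ)) * y ^ (b : ℕ) := by
            rw [hH]
            simp [Polynomial.eval_finset_sum, hG]
      _ = ∑ b : Fin n', ∑ a : Fin m, g (a, b) * (x ^ (a : ℕ) * y ^ (b : ℕ)) := by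
            refine Finset.sum_congr rfl fun b _ => ?_
            rw [Finset.sum_mul]
            refine Finset.sum_congr rfl fun a _ => ?_
            ring
      _ = 0 := key
    have hH0 : H = 0 := by
      refine Polynomial.eq_zero_of_natDegree_lt_card_of_eval_eq_zero' H _ hHeval ?_
      have := hfiber x
      omega
    intro b
    have := congrArg (fun P => Polynomial.coeff P (b : ℕ)) hH0
    simp only [hH] at this ⊢
    rw [aux_coeff_extract (fun b => (G b).eval x) b] at this
    simpa using this
  intro ab
  obtain ⟨a, b⟩ := ab
  have hGb0 : G b = 0 := by
    refine Polynomial.eq_zero_of_natDegree_lt_card_of_eval_eq_zero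
      (G b) (f := (id : F → F)) Function.injective_id (fun x => hGeval x b) ?_
    have hdeg : (G b).natDegree ≤ m - 1 := by
      refine Polynomial.natDegree_sum_le_of_forall_le _ _ fun a' _ => ?_
      refine le_trans (Polynomial.natDegree_C_mul_X_pow_le _ _) ?_
      have := a'.isLt
      omega
    rw [hcard]
    have hmle : m ≤ q ^ r - 1 := by rw [hm]; exact Nat.div_le_self _ _
    omega
  have := congrArg (fun P => Polynomial.coeff P (a : ℕ)) hGb0
  rw [hG] at this
  simp only at this
  rw [aux_coeff_extract (fun a => g (a, b)) a] at this
  simpa using this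
end
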